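/- arXiv:1609.05570 — 11 statements merged into one kernel-verified Lean document; each statement's English description precedes it below -/
import Mathlib

section
/- Let b be the sequence defined by b(0)=4, b(1)=7, b(2)=12 and b(n)=2b(n-1)-b(n-2)+b(n-3) for n≥3. Then for all n≥2, b(n) = floor(b(n-1)^2/b(n-2) + 1/2). -/
/-!
Write `D n = b (n+2) b n - b (n+1)²`. Then `b (n+1)² / b n = b (n+2) - D n / b n`, so the rounding
formula holds exactly when `2 |D n| < b n`. The Hankel determinants `D n` satisfy the linear
recurrence `D (n+3) = D (n+2) - 2 D (n+1) + D n`, whose characteristic roots have modulus at most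
`√α ≈ 1.32`, while `b` grows like `α ≈ 1.75` (the real root of `x³ - 2x² + x - 1`); in fact
`b (n+1) / b n ≥ 12/7` throughout. A quadratic Lyapunov function for the recurrence of `D`, which
grows by a factor at most `5/2 < (12/7)²` per step, turns this into `4 (D n)² < (b n)²`.
-/

theorem round_div_eq_of_two_mul_abs_sub_lt {K : Type*} [Field K] [LinearOrder K]
    [IsStrictOrderedRing K] [FloorRing K] {x d : K} {q : ℤ} (hd : 0 < d)
    (h : 2 * |x - q * d| < d) : round (x / d) = q := by
  have ⟨hlo, hhi⟩ := abs_lt.mp ((lt_div_iff₀' two_pos).mpr h)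
  rw [round_eq_iff, Set.mem_Ico, le_div_iff₀ hd, div_lt_iff₀ hd]
  constructor <;> linarith

def hankelDet {R : Type*} [CommRing R] (b : ℕ → R) (n : ℕ) : R :=
  b (n + 2) * b n - b (n + 1) ^ 2

theorem hankelDet_add_three {R : Type*} [CommRing R] {b : ℕ → R}
    (hrec : ∀ n, b (n + 3) = 2 * b (n + 2) - b (n + 1) + b n) (n : ℕ) :
    hankelDet b (n + 3) = hankelDet b (n + 2) - 2 * hankelDet b (n + 1) + hankelDet b n := by
  have h4 := hrec (n + 1)
  have h5 := hrec (n + 2)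
  simp only [hankelDet] at *
  rw [h5, h4, hrec n]
  ring

def lyapunovForm {R : Type*} [CommRing R] (x y z : R) : R :=
  4 * x ^ 2 + (x - y + z) ^ 2 + 3 * y ^ 2 + z ^ 2

theorem lyapunovForm_step {R : Type*} [CommRing R] [LinearOrder R] [IsStrictOrderedRing R]
    (x y z : R) : 2 * lyapunovForm y z (z - 2 * y + x) ≤ 5 * lyapunovForm x y z := by
  unfold lyapunovForm
  nlinarith [sq_nonneg (x + 2 * y - z), sq_nonneg (7 * x + 3 * z), sq_nonneg x]

section

variable {b : ℕ → ℤ}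

theorem ratio_bounds (h0 : b 0 = 4) (h1 : b 1 = 7) (h2 : b 2 = 12)
    (hrec : ∀ n, b (n + 3) = 2 * b (n + 2) - b (n + 1) + b n) (n : ℕ) :
    0 < b n ∧ 12 * b n ≤ 7 * b (n + 1) ∧ 5 * b (n + 1) ≤ 9 * b n := by
  induction n using Nat.twoStepInduction with
  | zero => simp only [h0, h1]; norm_num
  | one => simp only [h1, h2]; norm_num
  | more n ih₀ ih₁ =>
    obtain ⟨-, lo₀, hi₀⟩ := ih₀
    obtain ⟨pos₁, lo₁, hi₁⟩ := ih₁
    have := hrec n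
    exact ⟨by linarith, by linarith, by linarith⟩

theorem lyapunovForm_hankelDet_lt (h0 : b 0 = 4) (h1 : b 1 = 7) (h2 : b 2 = 12)
    (hrec : ∀ n, b (n + 3) = 2 * b (n + 2) - b (n + 1) + b n) (n : ℕ) :
    lyapunovForm (hankelDet b (n + 2)) (hankelDet b (n + 3)) (hankelDet b (n + 4)) <
      b (n + 2) ^ 2 := by
  induction n with
  | zero =>
    have h3 : b 3 = 21 := by rw [hrec 0, h2, h1, h0]; norm_num
    have h4 : b 4 = 37 := by rw [hrec 1, h3, h2, h1]; norm_num
    have h5 : b 5 = 65 := by rw [hrec 2, h4, h3, h2]; norm_num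
    have h6 : b 6 = 114 := by rw [hrec 3, h5, h4, h3]; norm_num
    simp only [lyapunovForm, hankelDet, h2, h3, h4, h5, h6]
    norm_num
  | succ n ih =>
    obtain ⟨pos, ratio, -⟩ := ratio_bounds h0 h1 h2 hrec (n + 2)
    have step :=
      lyapunovForm_step (hankelDet b (n + 2)) (hankelDet b (n + 3)) (hankelDet b (n + 4))
    rw [← hankelDet_add_three hrec] at step
    have growth : 5 * b (n + 2) ^ 2 ≤ 2 * b (n + 3) ^ 2 := by nlinarith
    linarith

theorem two_mul_abs_hankelDet_lt (h0 : b 0 = 4) (h1 : b 1 = 7) (h2 : b 2 = 12)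
    (hrec : ∀ n, b (n + 3) = 2 * b (n + 2) - b (n + 1) + b n) (n : ℕ) :
    2 * |hankelDet b n| < b n := by
  match n with
  | 0 => simp only [hankelDet, h0, h1, h2]; norm_num
  | 1 => simp only [hankelDet, h1, h2, hrec 0, h0]; norm_num
  | n + 2 =>
    have hQ := lyapunovForm_hankelDet_lt h0 h1 h2 hrec n
    have hsq : (2 * hankelDet b (n + 2)) ^ 2 < b (n + 2) ^ 2 := by
      unfold lyapunovForm at hQ
      nlinarith [sq_nonneg (hankelDet b (n + 2) - hankelDet b (n + 3) + hankelDet b (n + 4))]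
    rw [← abs_two, ← abs_mul]
    exact abs_lt_of_sq_lt_sq hsq (ratio_bounds h0 h1 h2 hrec (n + 2)).1.le

end

theorem stmt_0 (b : ℕ → ℤ)
    (h0 : b 0 = 4) (h1 : b 1 = 7) (h2 : b 2 = 12)
    (hrec : ∀ n, 3 ≤ n → b n = 2 * b (n-1) - b (n-2) + b (n-3)) :
    ∀ n, 2 ≤ n → b n = ⌊((b (n-1) : ℚ)^2 / (b (n-2) : ℚ)) + 1/2⌋ := by
  have hrec' (n : ℕ) : b (n + 3) = 2 * b (n + 2) - b (n + 1) + b n := hrec (n + 3) (by omega)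
  intro n hn
  obtain ⟨m, rfl⟩ := Nat.exists_eq_add_of_le' hn
  rw [show m + 2 - 1 = m + 1 by omega, show m + 2 - 2 = m by omega, ← round_eq, eq_comm]
  have hpos : (0 : ℚ) < b m := by exact_mod_cast (ratio_bounds h0 h1 h2 hrec' m).1
  have hD := two_mul_abs_hankelDet_lt h0 h1 h2 hrec' m
  rw [← abs_neg, hankelDet, neg_sub] at hD
  exact round_div_eq_of_two_mul_abs_sub_lt hpos (by exact_mod_cast hD)
end

section
/- The Pisot sequence E(4,7), defined by a(0)=4, a(1)=7, and a(n)=floor(a(n-1)^2/a(n-2)+1/2) for n≥2, satisfies the linear recurrence a(n)=2a(n-1)-a(n-2)+a(n-3) for all n≥3. -/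
private def b : ℕ → ℤ
  | 0 => 4
  | 1 => 7
  | 2 => 12
  | (n+3) => 2 * b (n+2) - b (n+1) + b n

private lemma hb3 (n : ℕ) : b (n+3) = 2 * b (n+2) - b (n+1) + b n := rfl

private def e (n : ℕ) : ℤ := b (n+2) * b n - b (n+1)^2

/-- Growth facts about b. -/
private lemma Gb : ∀ n : ℕ, 0 < b n ∧ b n ≤ b (n+1) ∧ b (n+1) ≤ 2 * b n ∧ 5 * b n ≤ 3 * b (n+1) := by
  have key : ∀ n : ℕ,
      (0 < b n ∧ b n ≤ b (n+1) ∧ b (n+1) ≤ 2 * b n ∧ 5 * b n ≤ 3 * b (n+1)) ∧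
      (0 < b (n+1) ∧ b (n+1) ≤ b (n+2) ∧ b (n+2) ≤ 2 * b (n+1) ∧ 5 * b (n+1) ≤ 3 * b (n+2)) := by
    intro n
    induction n with
    | zero =>
      refine ⟨⟨?_, ?_, ?_, ?_⟩, ⟨?_, ?_, ?_, ?_⟩⟩ <;> norm_num [b]
    | succ m ih =>
      obtain ⟨⟨h1, h2, h3, h4⟩, ⟨g1, g2, g3, g4⟩⟩ := ih
      have hr := hb3 m
      simp only [show m+1+1 = m+2 from rfl, show m+1+2 = m+3 from rfl]
      refine ⟨⟨g1, g2, g3, g4⟩, ⟨by omega, by omega, by omega, by omega⟩⟩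
  intro n; exact (key n).1

private lemma erec (n : ℕ) : e (n+3) = e (n+2) - 2 * e (n+1) + e n := by
  have h3 := hb3 n
  have h4 := hb3 (n+1)
  have h5 := hb3 (n+2)
  simp only [e, show n+1+2 = n+3 from rfl, show n+2+2 = n+4 from rfl,
    show n+3+2 = n+5 from rfl, show n+1+1 = n+2 from rfl, show n+2+1 = n+3 from rfl,
    show n+3+1 = n+4 from rfl, show n+1+3 = n+4 from rfl, show n+2+3 = n+5 from rfl] at *
  rw [h5, h4, h3]; ring

private def J (k : ℕ) : Prop :=
  (-(14 * b (k+1)) ≤ 37 * e (k+2) ∧ 37 * e (k+2) ≤ 14 * b (k+1)) ∧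
  (-(8 * b (k+1)) ≤ 37 * e (k+1) ∧ 37 * e (k+1) ≤ 8 * b (k+1)) ∧
  (-(9 * b (k+1)) ≤ 37 * e k ∧ 37 * e k ≤ 9 * b (k+1))

private lemma Jstep (k : ℕ) : J k → J (k+3) := by
  rintro ⟨⟨h1a, h1b⟩, ⟨h2a, h2b⟩, ⟨h3a, h3b⟩⟩
  have e3 := erec k
  have e4 := erec (k+1)
  have e5 := erec (k+2)
  have g1 := (Gb (k+1)).2.2.2
  have g2 := (Gb (k+2)).2.2.2
  have g3 := (Gb (k+3)).2.2.2
  have p1 := (Gb (k+1)).1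
  have p4 := (Gb (k+4)).1
  simp only [J, show k+1+2 = k+3 from rfl, show k+2+2 = k+4 from rfl,
    show k+1+1 = k+2 from rfl, show k+2+1 = k+3 from rfl, show k+3+1 = k+4 from rfl,
    show k+1+3 = k+4 from rfl, show k+2+3 = k+5 from rfl, show k+3+2 = k+5 from rfl] at *
  refine ⟨⟨by linarith, by linarith⟩, ⟨by linarith, by linarith⟩, ⟨by linarith, by linarith⟩⟩

private lemma Jall : ∀ k : ℕ, J (k + 2) := by
  intro k
  induction k using Nat.strong_induction_on with
  | _ k ih =>
    match k with
    | 0 => refine ⟨⟨?_, ?_⟩, ⟨?_, ?_⟩, ⟨?_, ?_⟩⟩ <;> norm_num [e, b]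
    | 1 => refine ⟨⟨?_, ?_⟩, ⟨?_, ?_⟩, ⟨?_, ?_⟩⟩ <;> norm_num [e, b]
    | 2 => refine ⟨⟨?_, ?_⟩, ⟨?_, ?_⟩, ⟨?_, ?_⟩⟩ <;> norm_num [e, b]
    | (m+3) =>
      have h := Jstep (m+2) (ih m (by omega))
      simpa [show m+2+3 = m+3+2 from rfl] using h

/-- The crucial bound. -/
private lemma ebound (m : ℕ) : -(b m) < 2 * e m ∧ 2 * e m < b m := by
  match m with
  | 0 => norm_num [e, b]
  | 1 => norm_num [e, b]
  | (k+2) =>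
    obtain ⟨_, _, ⟨ha, hb⟩⟩ := Jall k
    have hg := (Gb (k+2)).2.2.1
    have hpos := (Gb (k+2)).1
    simp only [show k+2+1 = k+3 from rfl, show k+1+1 = k+2 from rfl] at *
    constructor <;> linarith

/-- The rounding identity. -/
private lemma bround (m : ℕ) : (⌊((b (m+1) : ℚ))^2 / (b m : ℚ) + 1/2⌋ : ℤ) = b (m+2) := by
  have hpos : (0:ℤ) < b m := (Gb m).1
  have hq : (0:ℚ) < (b m : ℚ) := by exact_mod_cast hpos
  obtain ⟨he1, he2⟩ := ebound m
  simp only [e] at he1 he2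
  have he1q : -((b m : ℚ)) < 2 * ((b (m+2):ℚ) * (b m : ℚ) - (b (m+1):ℚ)^2) := by
    exact_mod_cast he1
  have he2q : 2 * ((b (m+2):ℚ) * (b m : ℚ) - (b (m+1):ℚ)^2) < (b m : ℚ) := by
    exact_mod_cast he2
  rw [Int.floor_eq_iff]
  constructor
  · have key1 : ((b (m+2)):ℚ) - 1/2 ≤ (b (m+1):ℚ)^2 / (b m:ℚ) := by
      rw [le_div_iff₀ hq]
      nlinarith
    linarith
  · have key2 : (b (m+1):ℚ)^2 / (b m:ℚ) < (b (m+2):ℚ) + 1/2 := by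
      rw [div_lt_iff₀ hq]
      nlinarith
    linarith

theorem stmt_1 (a : ℕ → ℤ)
    (h0 : a 0 = 4) (h1 : a 1 = 7)
    (hrec : ∀ n, 2 ≤ n → a n = ⌊((a (n-1) : ℚ)^2 / (a (n-2) : ℚ)) + 1/2⌋) :
    ∀ n, 3 ≤ n → a n = 2 * a (n-1) - a (n-2) + a (n-3) := by
  have hab : ∀ n, a n = b n := by
    intro n
    induction n using Nat.strong_induction_on with
    | _ n ih =>
      match n with
      | 0 => simpa [b] using h0
      | 1 => simpa [b] using h1
      | (m+2) =>
        have h1' : a (m+1) = b (m+1) := ih (m+1) (by omega)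
        have h2' : a m = b m := ih m (by omega)
        have h := hrec (m+2) (by omega)
        simp only [show m+2-1 = m+1 from rfl, show m+2-2 = m from rfl] at h
        rw [h, h1', h2', bround m]
  intro n hn
  obtain ⟨m, rfl⟩ : ∃ m, n = m + 3 := ⟨n - 3, by omega⟩
  simp only [show m+3-1 = m+2 from rfl, show m+3-2 = m+1 from rfl, show m+3-3 = m from rfl]
  rw [hab, hab, hab, hab, hb3]
end

section
/- Let b be the sequence defined by b(0)=5, b(1)=17, and b(n)=4b(n-1)-2b(n-2) for n≥2. Then for all n≥2, b(n) = floor(b(n-1)^2/b(n-2) + 1/2). -/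
theorem stmt_2 (b : ℕ → ℤ)
    (h0 : b 0 = 5) (h1 : b 1 = 17)
    (hrec : ∀ n, 2 ≤ n → b n = 4 * b (n-1) - 2 * b (n-2)) :
    ∀ n, 2 ≤ n → b n = ⌊((b (n-1) : ℚ)^2 / (b (n-2) : ℚ)) + 1/2⌋ := by
  have hrec' : ∀ m : ℕ, b (m+2) = 4 * b (m+1) - 2 * b m := by
    intro m
    have := hrec (m+2) (by omega)
    simpa using this
  -- growth: 0 < b n and 2*b n + 1 ≤ b (n+1)
  have grow : ∀ n : ℕ, 0 < b n ∧ 2 * b n + 1 ≤ b (n+1) := by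
    intro n
    induction n with
    | zero => simp only [Nat.zero_add]; omega
    | succ k ih =>
      obtain ⟨hp, hs⟩ := ih
      constructor
      · omega
      · rw [hrec' k]; omega
  have big : ∀ m : ℕ, 2 ^ (m+1) < b m := by
    intro m
    induction m with
    | zero => simp [h0]
    | succ k ih =>
      have ⟨hp, hs⟩ := grow k
      have : (2:ℤ)^(k+1+1) = 2 * 2^(k+1) := by ring
      omega
  -- Casoratian identity
  have ident : ∀ m : ℕ, b (m+2) * b m - b (m+1)^2 = 2 ^ m := by
    intro m
    induction m with
    | zero =>
      have := hrec' 0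
      rw [this, h0, h1]; norm_num
    | succ k ih =>
      have h3 := hrec' (k+1)
      have h2 := hrec' k
      rw [h3]
      have : (2:ℤ)^(k+1) = 2 * 2^k := by ring
      rw [this]
      linear_combination 2*ih - b (k+2) * h2
  intro n hn
  obtain ⟨m, rfl⟩ : ∃ m, n = m + 2 := ⟨n - 2, by omega⟩
  have hm1 : m + 2 - 1 = m + 1 := by omega
  have hm2 : m + 2 - 2 = m := by omega
  rw [hm1, hm2]
  have hb0 : (0:ℤ) < b m := (grow m).1
  have hb0Q : (0:ℚ) < (b m : ℚ) := by exact_mod_cast hb0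
  have hbig : (2:ℤ) ^ (m+1) < b m := big m
  have hbigQ : (2:ℚ) * 2 ^ m < (b m : ℚ) := by
    have : (2:ℤ) * 2 ^ m < b m := by
      have : (2:ℤ)^(m+1) = 2 * 2^m := by ring
      omega
    exact_mod_cast this
  have identQ : ((b (m+1) : ℚ))^2 = (b (m+2) : ℚ) * (b m : ℚ) - 2 ^ m := by
    have := ident m
    have : ((b (m+2) : ℚ)) * (b m) - (b (m+1))^2 = 2 ^ m := by exact_mod_cast this
    linarith
  have hdiv : ((b (m+1) : ℚ))^2 / (b m : ℚ) = (b (m+2) : ℚ) - 2 ^ m / (b m : ℚ) := by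
    rw [identQ]
    field_simp
  rw [hdiv]
  symm
  rw [Int.floor_eq_iff]
  have h2pos : (0:ℚ) < (2:ℚ)^m / (b m : ℚ) := by positivity
  have h2lt : (2:ℚ)^m / (b m : ℚ) < 1/2 := by
    rw [div_lt_iff₀ hb0Q]
    linarith
  constructor
  · linarith
  · linarith
end

section
/- The Pisot sequence E(5,17) satisfies a(n)=4a(n-1)-2a(n-2) for all n≥2. -/
lemma floor_key (x y d : ℤ) (hy : 0 < y)
    (hd : x^2 - 4*x*y + 2*y^2 = d) (h1 : -y ≤ 2*d) (h2 : 2*d < y) :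
    ⌊((x : ℚ)^2 / (y : ℚ)) + 1/2⌋ = 4*x - 2*y := by
  have hyQ : (0:ℚ) < (y:ℚ) := by exact_mod_cast hy
  have hdQ : (x:ℚ)^2 - 4*x*y + 2*y^2 = d := by exact_mod_cast hd
  have h1Q : (-(y:ℚ)) ≤ 2*d := by exact_mod_cast h1
  have h2Q : (2*(d:ℚ)) < y := by exact_mod_cast h2
  have ht : (x:ℚ)^2 = ((x:ℚ)^2/y)*y := (div_mul_cancel₀ _ (ne_of_gt hyQ)).symm
  rw [Int.floor_eq_iff]
  constructor
  · push_cast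
    nlinarith [ht, hyQ, h1Q, hdQ]
  · push_cast
    nlinarith [ht, hyQ, h2Q, hdQ]

theorem stmt_3 (a : ℕ → ℤ)
    (h0 : a 0 = 5) (h1 : a 1 = 17)
    (hrec : ∀ n, 2 ≤ n → a n = ⌊((a (n-1) : ℚ)^2 / (a (n-2) : ℚ)) + 1/2⌋) :
    ∀ n, 2 ≤ n → a n = 4 * a (n-1) - 2 * a (n-2) := by
  have key : ∀ n : ℕ, a (n+1) ≥ 2 * a n ∧ a n ≥ 5 * 2^n ∧
      (a (n+1))^2 - 4 * a (n+1) * a n + 2 * (a n)^2 = -(2^n) := by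
    intro n
    induction n with
    | zero => rw [h0, h1]; norm_num
    | succ n ih =>
      obtain ⟨hg, hb, he⟩ := ih
      have hpow : (0:ℤ) < 2^n := by positivity
      have hy : 0 < a n := by linarith
      have hstep : a (n+2) = 4 * a (n+1) - 2 * a n := by
        have h := hrec (n+2) (by omega)
        simp only [show n+2-1 = n+1 from rfl, show n+2-2 = n from rfl] at h
        rw [h, floor_key (a (n+1)) (a n) (-(2^n)) hy he (by linarith) (by linarith)]
      refine ⟨?_, ?_, ?_⟩
      · rw [hstep]; linarith
      · have : a (n+1) ≥ 2 * (5 * 2^n) := by linarith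
        calc a (n+1) ≥ 2 * (5 * 2^n) := this
          _ = 5 * 2^(n+1) := by ring
      · rw [hstep]; ring_nf; ring_nf at he; linarith
  intro n hn
  obtain ⟨m, rfl⟩ : ∃ m, n = m + 2 := ⟨n - 2, by omega⟩
  obtain ⟨hg, hb, he⟩ := key m
  have hpow : (0:ℤ) < 2^m := by positivity
  have hy : 0 < a m := by linarith
  have h := hrec (m+2) (by omega)
  simp only [show m+2-1 = m+1 from rfl, show m+2-2 = m from rfl] at h ⊢
  rw [h, floor_key (a (m+1)) (a m) (-(2^m)) hy he (by linarith) (by linarith)]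
end

section
/- Suppose a sequence b over a commutative ring satisfies b(n) = Σ_{i=1}^{k} C_i r_i^n for constants C_1,...,C_k and r_1,...,r_k. Then for all n≥2, b(n-1)^2 - b(n)·b(n-2) = - Σ_{1≤i<j≤k} C_i C_j r_i^{n-2} r_j^{n-2} (r_i - r_j)^2. -/
open Finset in
theorem stmt_5 {R : Type*} [CommRing R] (k : ℕ) (b : ℕ → R) (C r : Fin k → R)
    (hb : ∀ n, b n = ∑ i, C i * r i ^ n) :
    ∀ n, 2 ≤ n →
      b (n-1)^2 - b n * b (n-2) =
        - ∑ p ∈ Finset.univ.filter (fun p : Fin k × Fin k => p.1 < p.2),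
            C p.1 * C p.2 * r p.1 ^ (n-2) * r p.2 ^ (n-2) * (r p.1 - r p.2)^2 := by
  intro n hn
  obtain ⟨m, rfl⟩ : ∃ m, n = m + 2 := ⟨n - 2, by omega⟩
  have h1 : m + 2 - 1 = m + 1 := rfl
  have h2 : m + 2 - 2 = m := rfl
  rw [h1, h2, hb, hb, hb, sq, Finset.sum_mul_sum, Finset.sum_mul_sum]
  simp only [← Finset.sum_sub_distrib]
  set g : Fin k × Fin k → R := fun p =>
    C p.1 * r p.1 ^ (m + 1) * (C p.2 * r p.2 ^ (m + 1)) -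
      C p.1 * r p.1 ^ (m + 2) * (C p.2 * r p.2 ^ m) with hg
  have step : (∑ x : Fin k, ∑ y : Fin k,
      (C x * r x ^ (m + 1) * (C y * r y ^ (m + 1)) -
        C x * r x ^ (m + 2) * (C y * r y ^ m))) = ∑ p : Fin k × Fin k, g p :=
    (Fintype.sum_prod_type g).symm
  rw [step]
  rw [← Finset.sum_filter_add_sum_filter_not Finset.univ
    (fun p : Fin k × Fin k => p.1 < p.2)]
  have hdiag : ∑ p ∈ Finset.univ.filter (fun p : Fin k × Fin k => ¬ p.1 < p.2), g p
      = ∑ p ∈ Finset.univ.filter (fun p : Fin k × Fin k => p.2 < p.1), g p := by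
    symm
    apply Finset.sum_subset
    · intro p hp
      simp only [Finset.mem_filter, Finset.mem_univ, true_and] at *
      omega
    · intro p hp hp'
      simp only [Finset.mem_filter, Finset.mem_univ, true_and] at hp hp'
      have : p.1 = p.2 := le_antisymm (le_of_not_gt hp') (le_of_not_gt (by omega))
      simp [hg, this]
      ring
  rw [hdiag]
  have hswap : ∑ p ∈ Finset.univ.filter (fun p : Fin k × Fin k => p.2 < p.1), g p
      = ∑ p ∈ Finset.univ.filter (fun p : Fin k × Fin k => p.1 < p.2), g p.swap := by
    apply Finset.sum_nbij' (i := Prod.swap) (j := Prod.swap) <;>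
      simp [Finset.mem_filter]
  rw [hswap, ← Finset.sum_add_distrib, ← Finset.sum_neg_distrib]
  apply Finset.sum_congr rfl
  intro p hp
  simp only [hg, Prod.fst_swap, Prod.snd_swap]
  ring
end

section
/- For every integer k ≥ 1, the Pisot sequence E(4, 16k+1) satisfies the recurrence a(n) = 4k·a(n-1) + k·a(n-2) for all n ≥ 2. -/
lemma floor_key9 (x b c e : ℤ) (hb : 0 < b) (he : 2*|e| < b) (hs : x^2 = c*b - e) :
    ⌊(x:ℚ)^2/(b:ℚ) + 1/2⌋ = c := by
  have hbQ : (0:ℚ) < (b:ℚ) := by exact_mod_cast hb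
  have he1 : 2*e < b := by have := le_abs_self e; omega
  have he2 : -(2*e) < b := by have := neg_abs_le e; omega
  have hx : (x:ℚ)^2 = (c:ℚ)*(b:ℚ) - (e:ℚ) := by exact_mod_cast hs
  have heq : (x:ℚ)^2/(b:ℚ) + 1/2 = (c:ℚ) + ((b:ℚ) - 2*e)/(2*b) := by
    rw [hx]; field_simp; ring
  rw [heq, Int.floor_intCast_add]
  have h0 : ⌊((b:ℚ) - 2*e)/(2*b)⌋ = 0 := by
    rw [Int.floor_eq_zero_iff]
    constructor
    · apply div_nonneg
      · have : (2*e:ℚ) < b := by exact_mod_cast he1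
        linarith
      · linarith
    · rw [div_lt_one (by linarith)]
      have : (-(2*e):ℚ) < b := by exact_mod_cast he2
      linarith
  rw [h0, add_zero]

theorem stmt_9 (k : ℤ) (hk : 1 ≤ k) (a : ℕ → ℤ)
    (h0 : a 0 = 4) (h1 : a 1 = 16*k+1)
    (hrec : ∀ n, 2 ≤ n → a n = ⌊((a (n-1) : ℚ)^2 / (a (n-2) : ℚ)) + 1/2⌋) :
    ∀ n, 2 ≤ n → a n = 4*k * a (n-1) + k * a (n-2) := by
  have key : ∀ n : ℕ, a (n+2) = 4*k*a (n+1) + k*a n ∧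
      a (n+2) * a n - a (n+1)^2 = -(-k)^n ∧
      4*(4*k)^(n+1) ≤ a (n+1) ∧ 4*(4*k)^(n+2) ≤ a (n+2) := by
    intro n
    induction n with
    | zero =>
      have h2 := hrec 2 (by norm_num)
      rw [show (2:ℕ)-1 = 1 from rfl, show (2:ℕ)-2 = 0 from rfl, h0, h1] at h2
      have hfl := floor_key9 (16*k+1) 4 (64*k^2+8*k) (-1) (by norm_num)
        (by norm_num) (by ring)
      rw [hfl] at h2
      refine ⟨by rw [h2, h1, h0]; ring, by rw [h2, h1, h0]; ring, ?_, ?_⟩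
      · rw [h1, show 4*(4*k)^(0+1) = 16*k from by ring]; linarith
      · rw [h2, show 4*(4*k)^(0+2) = 64*k^2 from by ring]; nlinarith
    | succ n ih =>
      obtain ⟨ih1, ih2, ih3, ih4⟩ := ih
      have hkpos : (0:ℤ) < k := by linarith
      have hpow : k^(n+1) ≤ (4*k)^(n+1) :=
        pow_le_pow_left₀ (by linarith) (by linarith) _
      have hpow1 : (1:ℤ) ≤ k^(n+1) := one_le_pow₀ hk
      have hb : 0 < a (n+1) := by nlinarith
      have he : 2*|(-(-k)^(n+1))| < a (n+1) := by
        rw [abs_neg, abs_pow, abs_neg, abs_of_pos hkpos]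
        nlinarith
      have hs : (a (n+2))^2 = (4*k*a (n+2) + k*a (n+1)) * a (n+1) - (-(-k)^(n+1)) := by
        linear_combination a (n+2) * ih1 + k * ih2
      have h3 := hrec (n+3) (by omega)
      rw [show (n+3)-1 = n+2 from rfl, show (n+3)-2 = n+1 from rfl] at h3
      rw [floor_key9 (a (n+2)) (a (n+1)) (4*k*a (n+2) + k*a (n+1)) (-(-k)^(n+1))
        hb he hs] at h3
      refine ⟨h3, ?_, ih4, ?_⟩
      · rw [h3]; linarith [hs]
      · rw [h3]
        have : (4*k)^(n+3) = 4*k*(4*k)^(n+2) := by ring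
        nlinarith [pow_pos (by linarith : (0:ℤ) < 4*k) (n+1)]
  intro n hn
  obtain ⟨m, rfl⟩ : ∃ m, n = m + 2 := ⟨n - 2, by omega⟩
  rw [show (m+2)-1 = m+1 from rfl, show (m+2)-2 = m from rfl]
  exact (key m).1
end

section
/- For every integer k ≥ 1, the sequence b defined by b(0)=4, b(1)=16k+1, and b(n)=4k·b(n-1)+k·b(n-2) for n≥2 satisfies b(n)=floor(b(n-1)^2/b(n-2)+1/2) for all n≥2. -/
/-!
Cassini's identity for the recurrence gives `b(n-1)^2 = b(n) b(n-2) + (-k)^(n-2)`, so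
`b(n-1)^2 / b(n-2)` differs from the integer `b(n)` by `(-k)^(n-2) / b(n-2)`. Since
`b(m) ≥ 4 k^m`, this error has absolute value at most `1/4`, and rounding recovers `b(n)`.
-/

section LinearRecurrence

variable {R : Type*} {b : ℕ → R} {p q : R}

theorem cassini_of_linear_recurrence [CommRing R]
    (hrec : ∀ n, b (n + 2) = p * b (n + 1) + q * b n) (n : ℕ) :
    b (n + 2) * b n - b (n + 1) ^ 2 = (-q) ^ n * (b 2 * b 0 - b 1 ^ 2) := by
  induction n with
  | zero => ring
  | succ n ih =>
    linear_combination (-q) * ih + b (n + 1) * hrec (n + 1) - b (n + 2) * hrec n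

theorem mul_pow_le_of_linear_recurrence [CommRing R] [LinearOrder R] [IsStrictOrderedRing R]
    {c r : R} (hp : 0 ≤ p) (hq : 0 ≤ q) (hc : 0 ≤ c) (hr : 0 ≤ r) (hroot : r ^ 2 ≤ p * r + q)
    (hrec : ∀ n, b (n + 2) = p * b (n + 1) + q * b n) (h0 : c ≤ b 0) (h1 : c * r ≤ b 1)
    (n : ℕ) : c * r ^ n ≤ b n := by
  suffices ∀ n, c * r ^ n ≤ b n ∧ c * r ^ (n + 1) ≤ b (n + 1) from (this n).1
  intro n
  induction n with
  | zero => simpa using ⟨h0, h1⟩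
  | succ n ih =>
    refine ⟨ih.2, ?_⟩
    have hcr : 0 ≤ c * r ^ n := by positivity
    calc c * r ^ (n + 2) = c * r ^ n * r ^ 2 := by ring
      _ ≤ c * r ^ n * (p * r + q) := mul_le_mul_of_nonneg_left hroot hcr
      _ = p * (c * r ^ (n + 1)) + q * (c * r ^ n) := by ring
      _ ≤ p * b (n + 1) + q * b n := by gcongr; exacts [ih.2, ih.1]
      _ = b (n + 2) := (hrec n).symm

end LinearRecurrence

theorem round_intCast_add_of_abs_lt {α : Type*} [Field α] [LinearOrder α] [IsStrictOrderedRing α]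
    [FloorRing α] (n : ℤ) {e : α} (he : |e| < 1 / 2) : round ((n : α) + e) = n := by
  obtain ⟨hlo, hhi⟩ := abs_lt.mp he
  rw [round_intCast_add, round_eq_zero_iff.mpr ⟨by linarith, hhi⟩, add_zero]

theorem stmt_10 (k : ℤ) (hk : 1 ≤ k) (b : ℕ → ℤ)
    (h0 : b 0 = 4) (h1 : b 1 = 16*k+1)
    (hrec : ∀ n, 2 ≤ n → b n = 4*k * b (n-1) + k * b (n-2)) :
    ∀ n, 2 ≤ n → b n = ⌊((b (n-1) : ℚ)^2 / (b (n-2) : ℚ)) + 1/2⌋ := by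
  have hrec' : ∀ n, b (n + 2) = 4 * k * b (n + 1) + k * b n := fun n => by
    simpa using hrec (n + 2) (by omega)
  have hcassini (m : ℕ) : b (m + 1) ^ 2 = b (m + 2) * b m + (-k) ^ m := by
    have := cassini_of_linear_recurrence hrec' m
    rw [hrec' 0, h0, h1] at this
    linear_combination -this
  have hgrowth (m : ℕ) : 4 * k ^ m ≤ b m :=
    mul_pow_le_of_linear_recurrence (c := 4) (r := k) (by linarith) (by linarith) (by norm_num)
      (by linarith) (by nlinarith) hrec' h0.ge (by linarith) m
  intro n hn
  obtain ⟨m, rfl⟩ : ∃ m, n = m + 2 := ⟨n - 2, by omega⟩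
  simp only [Nat.add_sub_cancel, show m + 2 - 1 = m + 1 by omega]
  have hkm : (0 : ℚ) < (k : ℚ) ^ m := by positivity
  have hbm : 4 * (k : ℚ) ^ m ≤ b m := by exact_mod_cast hgrowth m
  have hbm_pos : (0 : ℚ) < b m := by linarith
  have hquot : ((b (m + 1) : ℚ)) ^ 2 / b m = b (m + 2) + (-k : ℚ) ^ m / b m := by
    rw [div_eq_iff hbm_pos.ne', add_mul, div_mul_cancel₀ _ hbm_pos.ne']
    exact_mod_cast hcassini m
  have herror : |(-k : ℚ) ^ m / b m| < 1 / 2 := by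
    rw [abs_div, abs_pow, abs_neg, abs_of_pos hbm_pos, div_lt_iff₀ hbm_pos,
      abs_of_pos (by positivity : (0 : ℚ) < k)]
    linarith
  rw [← round_eq, hquot, round_intCast_add_of_abs_lt _ herror]
end

section
/- For every integer k ≥ 1, the Pisot sequence E(4, 16k+5) satisfies the recurrence a(n) = (4k+2)·a(n-1) − (3k+1)·a(n-2) for all n ≥ 2. -/
/-!
Put `b = 4k + 2`, `c = 3k + 1` and `Q(x, y) = y² - bxy + cx²`. Then `y² = x(by - cx) + Q(x, y)` and
`Q(y, by - cx) = c Q(x, y)`, while `Q(4, 16k + 5) = 1`. So as long as the sequence has followed the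
linear recurrence, `Q(aₘ, aₘ₊₁) = cᵐ`, and `aₘ₊₁² / aₘ` is `b aₘ₊₁ - c aₘ` plus the error `cᵐ / aₘ`.
Since `aₘ₊₁ ≥ (c + 1) aₘ`, the sequence outgrows `2cᵐ`, the error stays below `1/2`, and rounding
returns exactly the next term of the linear recurrence.
-/

theorem floor_intCast_div_add_half_eq {K : Type*} [Field K] [LinearOrder K] [IsStrictOrderedRing K]
    [FloorRing K] {n p r e : ℤ} (hp : 0 < p) (hle : -p ≤ 2 * e) (hlt : 2 * e < p)
    (h : n = p * r + e) : ⌊(n : K) / p + 1 / 2⌋ = r := by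
  have hpK : (0 : K) < p := by exact_mod_cast hp
  have hsplit : (n : K) / p + 1 / 2 = r + (2 * e + p : ℤ) / (2 * p : ℤ) := by
    rw [h]; push_cast; field_simp; ring
  rw [hsplit, Int.floor_intCast_add, add_eq_left, Int.floor_eq_zero_iff]
  have h2p : (0 : K) < (2 * p : ℤ) := by exact_mod_cast (by omega : 0 < 2 * p)
  exact ⟨div_nonneg (by exact_mod_cast (by omega : 0 ≤ 2 * e + p)) h2p.le,
    (div_lt_one h2p).2 (by exact_mod_cast (by omega : 2 * e + p < 2 * p))⟩

section PisotForm

variable {R : Type*} [CommRing R]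

def pisotForm (b c x y : R) : R := y ^ 2 - b * x * y + c * x ^ 2

theorem pisotForm_step (b c x y : R) :
    pisotForm b c y (b * y - c * x) = c * pisotForm b c x y := by
  unfold pisotForm; ring

theorem sq_eq_mul_add_pisotForm (b c x y : R) :
    y ^ 2 = x * (b * y - c * x) + pisotForm b c x y := by
  unfold pisotForm; ring

end PisotForm

theorem floor_sq_div_add_half_eq_of_pisotForm {K : Type*} [Field K] [LinearOrder K]
    [IsStrictOrderedRing K] [FloorRing K] {b c x y : ℤ} (hx : 0 < x)
    (hle : -x ≤ 2 * pisotForm b c x y) (hlt : 2 * pisotForm b c x y < x) :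
    ⌊(y : K) ^ 2 / x + 1 / 2⌋ = b * y - c * x := by
  have h := floor_intCast_div_add_half_eq (K := K) hx hle hlt (sq_eq_mul_add_pisotForm b c x y)
  rwa [Int.cast_pow] at h

section

variable {k : ℤ}

theorem pisot_growth_step (hk : 1 ≤ k) {m : ℕ} {x y : ℤ} (hx : 2 * (3 * k + 1) ^ m < x)
    (hxy : (3 * k + 2) * x ≤ y) :
    2 * (3 * k + 1) ^ (m + 1) < y ∧ (3 * k + 2) * y ≤ (4 * k + 2) * y - (3 * k + 1) * x := by
  have hc : 0 < (3 * k + 1) ^ m := pow_pos (by omega) m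
  constructor
  · rw [pow_succ]; nlinarith
  · have hx0 : 0 < x := by omega
    have hky : k * ((3 * k + 2) * x) ≤ k * y := mul_le_mul_of_nonneg_left hxy (by omega)
    nlinarith [mul_nonneg (by nlinarith : 0 ≤ 3 * k ^ 2 - k - 1) hx0.le]

def PisotInvariant (k : ℤ) (a : ℕ → ℤ) (m : ℕ) : Prop :=
  2 * (3 * k + 1) ^ m < a m ∧ (3 * k + 2) * a m ≤ a (m + 1) ∧
    pisotForm (4 * k + 2) (3 * k + 1) (a m) (a (m + 1)) = (3 * k + 1) ^ m

variable {a : ℕ → ℤ} {m : ℕ}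

theorem PisotInvariant.next_eq (hk : 1 ≤ k) (hinv : PisotInvariant k a m)
    (hround : a (m + 2) = ⌊(a (m + 1) : ℚ) ^ 2 / a m + 1 / 2⌋) :
    a (m + 2) = (4 * k + 2) * a (m + 1) - (3 * k + 1) * a m := by
  obtain ⟨hbound, -, hform⟩ := hinv
  have hc : 0 < (3 * k + 1) ^ m := pow_pos (by omega) m
  rw [hround, floor_sq_div_add_half_eq_of_pisotForm (b := 4 * k + 2) (c := 3 * k + 1)
    (by omega) (by omega) (by omega)]

theorem PisotInvariant.succ (hk : 1 ≤ k) (hinv : PisotInvariant k a m)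
    (hnext : a (m + 2) = (4 * k + 2) * a (m + 1) - (3 * k + 1) * a m) :
    PisotInvariant k a (m + 1) := by
  obtain ⟨hbound, hratio, hform⟩ := hinv
  obtain ⟨hbound', hratio'⟩ := pisot_growth_step hk hbound hratio
  refine ⟨hbound', hnext ▸ hratio', ?_⟩
  rw [hnext, pisotForm_step, hform, pow_succ, mul_comm]

theorem pisotInvariant_of_round (hk : 1 ≤ k) (h0 : a 0 = 4) (h1 : a 1 = 16 * k + 5)
    (hround : ∀ m, a (m + 2) = ⌊(a (m + 1) : ℚ) ^ 2 / a m + 1 / 2⌋) :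
    ∀ m, PisotInvariant k a m
  | 0 => ⟨by simp [h0], by rw [h0, h1]; omega, by rw [h0, h1, pisotForm]; ring⟩
  | m + 1 =>
    have hinv := pisotInvariant_of_round hk h0 h1 hround m
    hinv.succ hk (hinv.next_eq hk (hround m))

end

theorem stmt_11 (k : ℤ) (hk : 1 ≤ k) (a : ℕ → ℤ)
    (h0 : a 0 = 4) (h1 : a 1 = 16*k+5)
    (hrec : ∀ n, 2 ≤ n → a n = ⌊((a (n-1) : ℚ)^2 / (a (n-2) : ℚ)) + 1/2⌋) :
    ∀ n, 2 ≤ n → a n = (4*k+2) * a (n-1) - (3*k+1) * a (n-2) := by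
  have hround (m : ℕ) : a (m + 2) = ⌊(a (m + 1) : ℚ) ^ 2 / a m + 1 / 2⌋ := by
    simpa using hrec (m + 2) (by omega)
  intro n hn
  obtain ⟨m, rfl⟩ : ∃ m, n = m + 2 := ⟨n - 2, by omega⟩
  simpa using (pisotInvariant_of_round hk h0 h1 hround m).next_eq hk (hround m)
end

section
/- For every integer k ≥ 1, the Pisot sequence E(4, 16k+15) satisfies the recurrence a(n) = (4k+4)·a(n-1) − (k+1)·a(n-2) for all n ≥ 2. -/
theorem stmt_12 (k : ℤ) (hk : 1 ≤ k) (a : ℕ → ℤ)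
    (h0 : a 0 = 4) (h1 : a 1 = 16*k+15)
    (hrec : ∀ n, 2 ≤ n → a n = ⌊((a (n-1) : ℚ)^2 / (a (n-2) : ℚ)) + 1/2⌋) :
    ∀ n, 2 ≤ n → a n = (4*k+4) * a (n-1) - (k+1) * a (n-2) := by
  have hq1 : (2:ℤ) ≤ k + 1 := by linarith
  have key : ∀ n : ℕ, 4*(k+1)^n ≤ a n ∧ 4*(k+1)^(n+1) ≤ a (n+1) ∧ a n ≤ a (n+1) ∧
      a (n+2) = (4*k+4) * a (n+1) - (k+1) * a n ∧
      a (n+2) * a n - a (n+1)^2 = -(k+1)^n := by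
    intro n
    induction n with
    | zero =>
      have ha2 : a 2 = 64*k^2+120*k+56 := by
        have h := hrec 2 (by norm_num)
        simp only [show (2:ℕ)-1 = 1 from rfl, show (2:ℕ)-2 = 0 from rfl, h0, h1] at h
        have heq : ((16*k+15 : ℤ) : ℚ)^2 / ((4:ℤ):ℚ) + 1/2
            = ((64*k^2+120*k+56 : ℤ) : ℚ) + 3/4 := by
          push_cast; ring
        rw [h, heq, Int.floor_intCast_add]
        norm_num
      refine ⟨by simp [h0], by simp [h1]; linarith, by rw [h0, h1]; linarith, ?_, ?_⟩
      · rw [ha2, h0, h1]; ring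
      · rw [ha2, h0, h1]; ring
    | succ n ih =>
      obtain ⟨hg0, hg1, hmono, hr, hD⟩ := ih
      have hp : (0:ℤ) < (k+1)^(n+1) := pow_pos (by linarith) _
      have hp2 : (0:ℤ) < (k+1)^(n+2) := pow_pos (by linarith) _
      have hpos1 : 0 < a (n+1) := lt_of_lt_of_le (by linarith) hg1
      -- growth
      have hstep : 3*(k+1)*a (n+1) ≤ a (n+2) := by
        rw [hr]; nlinarith
      have hg2 : 4*(k+1)^(n+2) ≤ a (n+2) := by
        have h1 : 3*(k+1)*(4*(k+1)^(n+1)) ≤ 3*(k+1)*a (n+1) := by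
          apply mul_le_mul_of_nonneg_left hg1; linarith
        have h2 : 4*(k+1)^(n+2) ≤ 3*(k+1)*(4*(k+1)^(n+1)) := by
          have : (k+1)^(n+2) = (k+1)*(k+1)^(n+1) := by ring
          nlinarith
        linarith
      have hmono2 : a (n+1) ≤ a (n+2) := by nlinarith
      -- the key integer identity
      have hb : a (n+2)^2 = ((4*k+4)*a (n+2) - (k+1)*a (n+1)) * a (n+1) + (k+1)^(n+1) := by
        linear_combination (a (n+2)) * hr - (k+1) * hD
      -- compute a (n+3)
      have h := hrec (n+3) (by omega)
      simp only [show n+3-1 = n+2 from rfl, show n+3-2 = n+1 from rfl] at h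
      have hane : ((a (n+1) : ℚ)) ≠ 0 := by
        exact_mod_cast (show (a (n+1) : ℤ) ≠ 0 from by linarith)
      set b : ℤ := (4*k+4)*a (n+2) - (k+1)*a (n+1) with hbdef
      have heq : (a (n+2) : ℚ)^2 / (a (n+1) : ℚ) + 1/2
          = (b : ℚ) + ((((k+1)^(n+1) : ℤ) : ℚ) / (a (n+1) : ℚ) + 1/2) := by
        field_simp
        have := congrArg (fun z : ℤ => (z : ℚ)) hb
        push_cast at this ⊢
        linarith [this]
      have hr0 : (0:ℚ) ≤ (((k+1)^(n+1) : ℤ) : ℚ) / (a (n+1) : ℚ) + 1/2 := by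
        have : (0:ℚ) < (((k+1)^(n+1) : ℤ) : ℚ) := by exact_mod_cast hp
        have hd : (0:ℚ) < (a (n+1) : ℚ) := by exact_mod_cast hpos1
        positivity
      have hr1 : (((k+1)^(n+1) : ℤ) : ℚ) / (a (n+1) : ℚ) + 1/2 < 1 := by
        have hd : (0:ℚ) < (a (n+1) : ℚ) := by exact_mod_cast hpos1
        have h2c : 2*(((k+1)^(n+1) : ℤ) : ℚ) < (a (n+1) : ℚ) := by
          exact_mod_cast (show 2*((k+1)^(n+1) : ℤ) < a (n+1) from by linarith)
        have hlt : (((k+1)^(n+1) : ℤ) : ℚ) / (a (n+1) : ℚ) < 1/2 := by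
          rw [div_lt_iff₀ hd]; linarith
        linarith
      have hr' : a (n+3) = b := by
        rw [h, heq, Int.floor_intCast_add]
        have hz : ⌊(((k+1)^(n+1) : ℤ) : ℚ) / (a (n+1) : ℚ) + 1/2⌋ = 0 := by
          rw [Int.floor_eq_zero_iff]; exact ⟨hr0, hr1⟩
        rw [hz, add_zero]
      exact ⟨hg1, hg2, hmono2, hr', by
        rw [show n+1+2 = n+3 from rfl, hr']; linear_combination -hb⟩
  intro n hn
  obtain ⟨m, rfl⟩ : ∃ m, n = m + 2 := ⟨n - 2, by omega⟩
  have h := (key m).2.2.2.1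
  simpa using h
end

section
/- For every integer k ≥ 1, the Pisot sequence E(5, 25k+1) satisfies the recurrence a(n) = 5k·a(n-1) + k·a(n-2) for all n ≥ 2. -/
lemma floor_helper13 (x y b e : ℤ) (hy : 0 < y) (he : x^2 = b*y + e)
    (h1 : -y < 2*e) (h2 : 2*e < y) :
    ⌊((x:ℚ)^2 / (y:ℚ)) + 1/2⌋ = b := by
  have hy' : (0:ℚ) < (y:ℚ) := by exact_mod_cast hy
  have key : ((x:ℚ)^2 / (y:ℚ)) + 1/2 = (2*e + y)/(2*y) + b := by
    have hx : (x:ℚ)^2 = b*y + e := by exact_mod_cast congrArg (Int.cast : ℤ → ℚ) he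
    rw [hx]
    field_simp
    ring
  rw [key, Int.floor_add_intCast]
  have h0 : ⌊(2*(e:ℚ) + y)/(2*y)⌋ = 0 := by
    rw [Int.floor_eq_zero_iff]
    constructor
    · apply div_nonneg
      · have : (0:ℚ) < 2*e + y := by
          have h1' : -(y:ℚ) < 2*(e:ℚ) := by exact_mod_cast h1
          linarith
        linarith
      · linarith
    · rw [div_lt_one (by linarith)]
      have : (2*(e:ℚ)) < y := by exact_mod_cast h2
      linarith
  omega

theorem stmt_13 (k : ℤ) (hk : 1 ≤ k) (a : ℕ → ℤ)
    (h0 : a 0 = 5) (h1 : a 1 = 25*k+1)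
    (hrec : ∀ n, 2 ≤ n → a n = ⌊((a (n-1) : ℚ)^2 / (a (n-2) : ℚ)) + 1/2⌋) :
    ∀ n, 2 ≤ n → a n = 5*k * a (n-1) + k * a (n-2) := by
  have hk' : 0 < k := hk
  have J : ∀ m : ℕ, a (m+2) = 5*k*a (m+1) + k*a m ∧
      a (m+2) * a m - a (m+1)^2 = -(-k)^m ∧
      2*k^(m+1) < a (m+1) ∧ 2*k^(m+2) < a (m+2) ∧ 0 < a (m+1) := by
    intro m
    induction m with
    | zero =>
      have h2 := hrec 2 (by norm_num)
      have e2 : a 2 = 125*k^2 + 10*k := by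
        rw [show (2:ℕ)-1 = 1 from rfl, show (2:ℕ)-2 = 0 from rfl, h0, h1] at h2
        rw [h2]
        exact floor_helper13 (25*k+1) 5 (125*k^2+10*k) 1 (by norm_num)
          (by ring) (by norm_num) (by norm_num)
      refine ⟨by rw [e2, h0, h1]; ring, by rw [e2, h0, h1]; ring, ?_, ?_, ?_⟩
      · rw [h1]; have : k^(0+1) = k := by ring
        rw [this]; nlinarith
      · rw [e2]; have : k^(0+2) = k*k := by ring
        rw [this]; nlinarith [mul_pos hk' hk']
      · rw [h1]; nlinarith
    | succ m ih =>
      obtain ⟨hlin, hQ, hg1, hg2, hp1⟩ := ih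
      have hp2 : 0 < a (m+2) := by
        have := pow_pos hk' (m+2); linarith
      have he : a (m+2)^2 = (5*k*a (m+2) + k*a (m+1)) * a (m+1) + (-k)^(m+1) := by
        linear_combination a (m+2) * hlin + k * hQ
      have habs : |(-k)^(m+1)| = k^(m+1) := by
        rw [abs_pow, abs_neg, abs_of_pos hk']
      have hb1 : -(a (m+1)) < 2*(-k)^(m+1) := by
        have := neg_abs_le ((-k)^(m+1))
        rw [habs] at this
        linarith
      have hb2 : 2*(-k)^(m+1) < a (m+1) := by
        have := le_abs_self ((-k)^(m+1))
        rw [habs] at this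
        linarith
      have h3 := hrec (m+3) (by omega)
      rw [show (m+3)-1 = m+2 from rfl, show (m+3)-2 = m+1 from rfl] at h3
      have e3 : a (m+3) = 5*k*a (m+2) + k*a (m+1) := by
        rw [h3]
        exact floor_helper13 (a (m+2)) (a (m+1)) (5*k*a (m+2) + k*a (m+1))
          ((-k)^(m+1)) hp1 he hb1 hb2
      refine ⟨e3, by rw [e3]; linear_combination -(1:ℤ) * he, hg2, ?_, hp2⟩
      rw [e3]
      have hpow : 0 < k^(m+2) := pow_pos hk' (m+2)
      have hpow3 : (0:ℤ) < k^(m+3) := pow_pos hk' (m+3)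
      have : k^(m+3) = k * k^(m+2) := by ring
      nlinarith [mul_pos hk' hp1, mul_lt_mul_of_pos_left hg2 hk']
  intro n hn
  obtain ⟨m, rfl⟩ : ∃ m, n = m + 2 := ⟨n - 2, by omega⟩
  exact (J m).1
end

section
/- For every integer k ≥ 1, the Pisot sequence E(6, 36k+1) satisfies the recurrence a(n) = 6k·a(n-1) + k·a(n-2) for all n ≥ 2. -/
lemma floor_aux_stmt14 (k C A : ℤ) (n : ℕ) (hk : 1 ≤ k) (hC : 0 < C)
    (hD : A^2 - 6*k*A*C - k*C^2 = (-k)^n) (hg : 2*k^n < C) :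
    ⌊((A:ℚ)^2 / (C:ℚ)) + 1/2⌋ = 6*k*A + k*C := by
  have hCq : (0:ℚ) < (C:ℚ) := by exact_mod_cast hC
  have habs : |(-k)^n| = k^n := by
    rw [abs_pow, abs_neg, abs_of_pos (by linarith)]
  have h1 : -(k^n) ≤ (-k)^n := by rw [← habs]; exact neg_abs_le _
  have h2 : (-k)^n ≤ k^n := by rw [← habs]; exact le_abs_self _
  have hDq : (A:ℚ)^2 - 6*(k:ℚ)*A*C - (k:ℚ)*C^2 = (-(k:ℚ))^n := by exact_mod_cast hD
  have h1q : -((k:ℚ)^n) ≤ (-(k:ℚ))^n := by exact_mod_cast h1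
  have h2q : (-(k:ℚ))^n ≤ (k:ℚ)^n := by exact_mod_cast h2
  have hgq : 2*(k:ℚ)^n < (C:ℚ) := by exact_mod_cast hg
  rw [Int.floor_eq_iff]
  constructor
  · rw [← sub_le_iff_le_add, le_div_iff₀ hCq]
    push_cast
    nlinarith [hDq, h1q, hgq]
  · rw [← lt_sub_iff_add_lt, div_lt_iff₀ hCq]
    push_cast
    nlinarith [hDq, h2q, hgq]

theorem stmt_14 (k : ℤ) (hk : 1 ≤ k) (a : ℕ → ℤ)
    (h0 : a 0 = 6) (h1 : a 1 = 36*k+1)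
    (hrec : ∀ n, 2 ≤ n → a n = ⌊((a (n-1) : ℚ)^2 / (a (n-2) : ℚ)) + 1/2⌋) :
    ∀ n, 2 ≤ n → a n = 6*k * a (n-1) + k * a (n-2) := by
  have kpos : (0:ℤ) < k := by linarith
  have key : ∀ n : ℕ, ((a (n+1))^2 - 6*k*(a (n+1))*(a n) - k*(a n)^2 = (-k)^n)
      ∧ 2*k^n < a n ∧ 2*k^(n+1) < a (n+1) ∧ a (n+2) = 6*k*(a (n+1)) + k*(a n) := by
    intro n
    induction n with
    | zero =>
      have hD : (a 1)^2 - 6*k*(a 1)*(a 0) - k*(a 0)^2 = (-k)^0 := by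
        rw [h0, h1]; ring
      have hg : 2*k^0 < a 0 := by rw [h0]; norm_num
      refine ⟨hD, hg, by rw [h1, pow_one]; linarith, ?_⟩
      have hr := hrec 2 (le_refl 2)
      rw [show (2:ℕ)-1 = 1 from rfl, show (2:ℕ)-2 = 0 from rfl] at hr
      rw [hr, floor_aux_stmt14 k (a 0) (a 1) 0 hk (by rw [h0]; norm_num) hD hg]
    | succ n ih =>
      obtain ⟨hD, hg0, hg1, hstep⟩ := ih
      have hC : 0 < a n := lt_trans (mul_pos two_pos (pow_pos kpos n)) hg0
      have hC1 : 0 < a (n+1) := lt_trans (mul_pos two_pos (pow_pos kpos (n+1))) hg1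
      have hD1 : (a (n+2))^2 - 6*k*(a (n+2))*(a (n+1)) - k*(a (n+1))^2 = (-k)^(n+1) := by
        rw [hstep]; linear_combination (-k) * hD
      have hg2 : 2*k^(n+2) < a (n+2) := by
        rw [hstep]
        have h := mul_lt_mul_of_pos_left hg1 kpos
        have heq : 2*k^(n+2) = k*(2*k^(n+1)) := by ring
        linarith [mul_pos kpos hC, mul_pos kpos hC1]
      refine ⟨hD1, hg1, hg2, ?_⟩
      have hr := hrec (n+3) (by omega)
      rw [show n+3-1 = n+2 from rfl, show n+3-2 = n+1 from rfl] at hr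
      rw [hr, floor_aux_stmt14 k (a (n+1)) (a (n+2)) (n+1) hk hC1 hD1 hg1]
  intro n hn
  obtain ⟨m, rfl⟩ : ∃ m, n = m + 2 := ⟨n-2, by omega⟩
  exact (key m).2.2.2
end
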